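/- arXiv:2509.03076 — 2 statements merged into one kernel-verified Lean document; each statement's English description precedes it below -/
import Mathlib

section
/- Let f be a holomorphic self-map of the unit disk D without fixed points. If the hyperbolic step s^f vanishes at one point z_0 ∈ D, then every left straightening of {f^n} is a constant map. -/
open Complex Metric Filter Set

/-!
Write `g_n = γ_n⁻¹ ∘ f^[n]`. Automorphisms are isometries and `f^[n]` is a contraction for the
pseudo-hyperbolic distance `ρ`, so `|g_n z₀ - g_n (f z₀)| ≤ 2 ρ(f^[n] z₀, f^[n+1] z₀) → 0`, hence
`h (f z₀) = h z₀`. If `h` were not constant, `f z₀` would be an isolated solution of `h w = h z₀`,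
and by Hurwitz's theorem (Rouché) `g_n w = g_n z₀` would have a solution `w` near `f z₀` for some
large `n`. Injectivity of `γ_n⁻¹` gives `f^[n] w = f^[n] z₀`, so `h w = h z₀`, while `w ≠ f z₀`
because `f` has no fixed point: a contradiction.
-/

/-- Inverse hyperbolic tangent. -/
noncomputable def artanh (t : ℝ) : ℝ := (1/2) * Real.log ((1 + t) / (1 - t))

/-- Poincaré distance on the unit disk. -/
noncomputable def pd (z w : ℂ) : ℝ :=
  artanh ‖(w - z) / (1 - (starRingEnd ℂ) z * w)‖

/-- Holomorphic self-map of the unit disk. -/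
def HolSelfDisk (f : ℂ → ℂ) : Prop :=
  DifferentiableOn ℂ f (ball (0:ℂ) 1) ∧ MapsTo f (ball (0:ℂ) 1) (ball (0:ℂ) 1)

/-- A pair of maps that are mutually inverse holomorphic self-maps of the disk,
i.e. an automorphism of the disk together with its inverse. -/
def IsDiskAutPair (γ γinv : ℂ → ℂ) : Prop :=
  HolSelfDisk γ ∧ HolSelfDisk γinv ∧
  (∀ z ∈ ball (0:ℂ) 1, γinv (γ z) = z) ∧ (∀ z ∈ ball (0:ℂ) 1, γ (γinv z) = z)

open Topology ComplexConjugate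

noncomputable def mobius (a z : ℂ) : ℂ := (z - a) / (1 - conj a * z)

section Mobius

variable {a z w : ℂ}

theorem normSq_one_sub_conj_mul (z w : ℂ) :
    normSq (1 - conj z * w) = normSq (w - z) + (1 - normSq z) * (1 - normSq w) := by
  simp only [normSq_apply, mul_re, mul_im, sub_re, sub_im, conj_re, conj_im, one_re, one_im]
  ring

theorem norm_sub_lt_norm_one_sub_conj_mul (hz : z ∈ ball (0:ℂ) 1) (hw : w ∈ ball (0:ℂ) 1) :
    ‖w - z‖ < ‖1 - conj z * w‖ := by
  rw [mem_ball_zero_iff] at hz hw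
  rw [← pow_lt_pow_iff_left₀ (norm_nonneg _) (norm_nonneg _) two_ne_zero,
    ← normSq_eq_norm_sq, ← normSq_eq_norm_sq, normSq_one_sub_conj_mul]
  simp only [normSq_eq_norm_sq]
  have hz2 : ‖z‖ ^ 2 < 1 := by nlinarith [norm_nonneg z]
  have hw2 : ‖w‖ ^ 2 < 1 := by nlinarith [norm_nonneg w]
  nlinarith

theorem one_sub_conj_mul_ne_zero (hz : z ∈ ball (0:ℂ) 1) (hw : w ∈ ball (0:ℂ) 1) :
    1 - conj z * w ≠ 0 :=
  norm_pos_iff.mp ((norm_nonneg _).trans_lt (norm_sub_lt_norm_one_sub_conj_mul hz hw))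

theorem mobius_mem_ball (ha : a ∈ ball (0:ℂ) 1) (hz : z ∈ ball (0:ℂ) 1) :
    mobius a z ∈ ball (0:ℂ) 1 := by
  have hlt := norm_sub_lt_norm_one_sub_conj_mul ha hz
  rw [mem_ball_zero_iff, mobius, norm_div, div_lt_one ((norm_nonneg _).trans_lt hlt)]
  exact hlt

theorem differentiableOn_mobius (ha : a ∈ ball (0:ℂ) 1) :
    DifferentiableOn ℂ (mobius a) (ball (0:ℂ) 1) :=
  (differentiableOn_id.sub_const a).div ((differentiableOn_id.const_mul _).const_sub 1)
    fun _ hz => one_sub_conj_mul_ne_zero ha hz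

@[simp] theorem mobius_self (a : ℂ) : mobius a a = 0 := by simp [mobius]

@[simp] theorem mobius_neg_zero (a : ℂ) : mobius (-a) 0 = a := by simp [mobius]

theorem mobius_neg_mobius (ha : a ∈ ball (0:ℂ) 1) (hz : z ∈ ball (0:ℂ) 1) :
    mobius (-a) (mobius a z) = z := by
  have h₁ := one_sub_conj_mul_ne_zero ha hz
  have h₂ := one_sub_conj_mul_ne_zero ha ha
  have h₃ : 1 - conj a * z + conj a * (z - a) ≠ 0 := by rwa [show
    1 - conj a * z + conj a * (z - a) = 1 - conj a * a by ring]
  simp only [mobius, map_neg]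
  rw [sub_neg_eq_add, div_add' _ _ _ h₁, neg_mul, sub_neg_eq_add, mul_div_assoc', add_div' _ _ _ h₁,
    div_div_div_cancel_right₀ h₁, one_mul, div_eq_iff h₃]
  ring

theorem dist_le_two_mul_norm_mobius (hz : z ∈ ball (0:ℂ) 1) (hw : w ∈ ball (0:ℂ) 1) :
    dist z w ≤ 2 * ‖mobius z w‖ := by
  have hden : ‖1 - conj z * w‖ ≤ 2 := calc
    ‖1 - conj z * w‖ ≤ ‖(1:ℂ)‖ + ‖z‖ * ‖w‖ := by
      simpa only [norm_mul, Complex.norm_conj] using norm_sub_le (1:ℂ) (conj z * w)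
    _ ≤ 2 := by
      rw [mem_ball_zero_iff] at hz hw
      nlinarith [norm_nonneg z, norm_nonneg w, norm_one (α := ℂ)]
  calc dist z w = ‖mobius z w‖ * ‖1 - conj z * w‖ := by
        rw [mobius, norm_div, div_mul_cancel₀ _ (norm_ne_zero_iff.mpr
          (one_sub_conj_mul_ne_zero hz hw)), dist_comm, dist_eq_norm]
    _ ≤ 2 * ‖mobius z w‖ := by
      rw [mul_comm]; exact mul_le_mul_of_nonneg_right hden (norm_nonneg _)

end Mobius

theorem HolSelfDisk.comp {f g : ℂ → ℂ} (hg : HolSelfDisk g) (hf : HolSelfDisk f) :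
    HolSelfDisk (g ∘ f) :=
  ⟨hg.1.comp hf.1 hf.2, hg.2.comp hf.2⟩

theorem HolSelfDisk.iterate {f : ℂ → ℂ} (hf : HolSelfDisk f) (n : ℕ) : HolSelfDisk f^[n] := by
  induction n with
  | zero => exact ⟨differentiableOn_id, mapsTo_id _⟩
  | succ n ih => rw [Function.iterate_succ']; exact hf.comp ih

theorem holSelfDisk_mobius {a : ℂ} (ha : a ∈ ball (0:ℂ) 1) : HolSelfDisk (mobius a) :=
  ⟨differentiableOn_mobius ha, fun _ => mobius_mem_ball ha⟩

theorem HolSelfDisk.norm_mobius_le {F : ℂ → ℂ} (hF : HolSelfDisk F) {a z : ℂ}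
    (ha : a ∈ ball (0:ℂ) 1) (hz : z ∈ ball (0:ℂ) 1) :
    ‖mobius (F a) (F z)‖ ≤ ‖mobius a z‖ := by
  have hna : -a ∈ ball (0:ℂ) 1 := by rwa [mem_ball_zero_iff, norm_neg, ← mem_ball_zero_iff]
  have hFa : F a ∈ ball (0:ℂ) 1 := hF.2 ha
  have hG : HolSelfDisk (mobius (F a) ∘ F ∘ mobius (-a)) :=
    (holSelfDisk_mobius hFa).comp (hF.comp (holSelfDisk_mobius hna))
  have hG0 : (mobius (F a) ∘ F ∘ mobius (-a)) 0 = 0 := by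
    simp only [Function.comp_apply, mobius_neg_zero, mobius_self]
  simpa [mobius_neg_mobius ha hz] using Complex.norm_le_norm_of_mapsTo_ball hG.1
    (hG.2.mono_right ball_subset_closedBall) hG0 (mem_ball_zero_iff.mp (mobius_mem_ball ha hz))

theorem le_artanh {t : ℝ} (ht₀ : 0 ≤ t) (ht₁ : t < 1) : t ≤ artanh t := by
  have hseries := Real.hasSum_log_sub_log_of_abs_lt_one (x := t) (by rwa [abs_of_nonneg ht₀])
  have hfirst := le_hasSum hseries 0 fun k _ => by positivity
  rw [artanh, Real.log_div (by linarith) (by linarith)]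
  simp only [CharP.cast_eq_zero, mul_zero, zero_add, div_one, mul_one, pow_one] at hfirst
  linarith

theorem norm_mobius_le_pd {z w : ℂ} (hz : z ∈ ball (0:ℂ) 1) (hw : w ∈ ball (0:ℂ) 1) :
    ‖mobius z w‖ ≤ pd z w :=
  le_artanh (norm_nonneg _) (mem_ball_zero_iff.mp (mobius_mem_ball hz hw))

theorem eq_of_tendsto_pd {ι : Type*} {l : Filter ι} [l.NeBot] {G : ι → ℂ → ℂ}
    (hG : ∀ i, HolSelfDisk (G i)) {a b : ι → ℂ} (ha : ∀ i, a i ∈ ball (0:ℂ) 1)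
    (hb : ∀ i, b i ∈ ball (0:ℂ) 1) (hab : Tendsto (fun i => pd (a i) (b i)) l (𝓝 0))
    {p q : ℂ} (hp : Tendsto (fun i => G i (a i)) l (𝓝 p))
    (hq : Tendsto (fun i => G i (b i)) l (𝓝 q)) : p = q := by
  have hdist : Tendsto (fun i => dist (G i (a i)) (G i (b i))) l (𝓝 0) := by
    refine squeeze_zero (fun _ => dist_nonneg) (fun i => ?_) (by simpa using hab.const_mul 2)
    calc dist (G i (a i)) (G i (b i)) ≤ 2 * ‖mobius (G i (a i)) (G i (b i))‖ :=
          dist_le_two_mul_norm_mobius ((hG i).2 (ha i)) ((hG i).2 (hb i))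
      _ ≤ 2 * pd (a i) (b i) := by
          gcongr
          exact ((hG i).norm_mobius_le (ha i) (hb i)).trans (norm_mobius_le_pd (ha i) (hb i))
  exact dist_eq_zero.mp (tendsto_nhds_unique (hp.dist hq) hdist)

theorem eq_of_iterate_eq {α β : Type*} [TopologicalSpace β] [T2Space β] {f : α → α}
    {G : ℕ → α → β} {w z : α} {p q : β} (hw : Tendsto (fun m => G m (f^[m] w)) atTop (𝓝 p))
    (hz : Tendsto (fun m => G m (f^[m] z)) atTop (𝓝 q)) {n : ℕ} (hn : f^[n] w = f^[n] z) :
    p = q := by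
  refine tendsto_nhds_unique ((hw.comp (tendsto_add_atTop_nat n)).congr fun m => ?_)
    (hz.comp (tendsto_add_atTop_nat n))
  simp only [Function.comp_apply, Function.iterate_add_apply, hn]

theorem exists_mem_ball_eq_zero_of_norm_lt {g : ℂ → ℂ} {a : ℂ} {r : ℝ} (hr : 0 < r)
    (hg : DiffContOnCl ℂ g (ball a r)) (hlt : ∀ z ∈ sphere a r, ‖g a‖ < ‖g z‖) :
    ∃ w ∈ ball a r, g w = 0 := by
  by_contra! hne
  have hne' : ∀ z ∈ closure (ball a r), g z ≠ 0 := by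
    intro z hz
    rw [closure_ball a hr.ne', ← ball_union_sphere] at hz
    rcases hz with hz | hz
    · exact hne z hz
    · exact norm_pos_iff.mp ((norm_nonneg _).trans_lt (hlt z hz))
  obtain ⟨z, hz, hmax⟩ :=
    Complex.exists_mem_frontier_isMaxOn_norm isBounded_ball (nonempty_ball.2 hr) (hg.inv hne')
  rw [frontier_ball a hr.ne'] at hz
  have hle : ‖(g a)⁻¹‖ ≤ ‖(g z)⁻¹‖ := hmax (subset_closure (mem_ball_self hr))
  rw [norm_inv, norm_inv] at hle
  have hga : 0 < ‖g a‖ := norm_pos_iff.mpr (hne a (mem_ball_self hr))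
  exact (hlt z hz).not_ge ((inv_le_inv₀ hga (hga.trans (hlt z hz))).mp hle)

theorem eventually_exists_mem_ball_eq_of_tendstoUniformlyOn {ι : Type*} {l : Filter ι}
    {F : ι → ℂ → ℂ} {φ : ℂ → ℂ} {c : ι → ℂ} {a : ℂ} {r : ℝ} (hr : 0 < r)
    (hF : ∀ i, DiffContOnCl ℂ (F i) (ball a r)) (hφ : ContinuousOn φ (sphere a r))
    (hFφ : TendstoUniformlyOn F φ l (closedBall a r)) (hc : Tendsto c l (𝓝 (φ a)))
    (hφa : ∀ z ∈ sphere a r, φ z ≠ φ a) :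
    ∀ᶠ i in l, ∃ w ∈ ball a r, F i w = c i := by
  obtain ⟨x, hx, hmin⟩ := (isCompact_sphere a r).exists_isMinOn
    (NormedSpace.sphere_nonempty.mpr hr.le) (hφ.sub continuousOn_const).norm
  set δ := ‖φ x - φ a‖
  have hδ : 0 < δ := norm_pos_iff.mpr (sub_ne_zero.mpr (hφa x hx))
  filter_upwards [Metric.tendstoUniformlyOn_iff.mp hFφ (δ / 4) (by positivity),
    Metric.tendsto_nhds.mp hc (δ / 4) (by positivity)] with i hFi hci
  suffices ∃ w ∈ ball a r, F i w - c i = 0 by simpa only [sub_eq_zero] using this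
  refine exists_mem_ball_eq_zero_of_norm_lt hr ((hF i).sub_const (c i)) fun z hz => ?_
  have hFa := hFi a (mem_closedBall_self hr.le)
  have hFz := hFi z (sphere_subset_closedBall hz)
  have hδz : δ ≤ ‖φ z - φ a‖ := hmin hz
  simp only [← dist_eq_norm] at hδz ⊢
  have := dist_triangle (F i a) (φ a) (c i)
  have := dist_triangle4 (φ z) (F i z) (c i) (φ a)
  rw [dist_comm] at hFa
  linarith [dist_comm (φ a) (c i)]

theorem IsDiskAutPair.injOn_inv {γ γinv : ℂ → ℂ} (hγ : IsDiskAutPair γ γinv) :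
    InjOn γinv (ball (0:ℂ) 1) := fun u hu v hv huv => by
  rw [← hγ.2.2.2 u hu, huv, hγ.2.2.2 v hv]

theorem frequently_apply_eq_of_apply_eq {f h : ℂ → ℂ} {G : ℕ → ℂ → ℂ} (hf : HolSelfDisk f)
    (hfix : ∀ z ∈ ball (0:ℂ) 1, f z ≠ z) (hG : ∀ n, DifferentiableOn ℂ (G n) (ball (0:ℂ) 1))
    (hGinj : ∀ n, InjOn (G n) (ball (0:ℂ) 1)) (hh : ContinuousOn h (ball (0:ℂ) 1))
    (hconv : TendstoLocallyUniformlyOn (fun n z => G n (f^[n] z)) h atTop (ball (0:ℂ) 1))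
    {z : ℂ} (hz : z ∈ ball (0:ℂ) 1) (hfz : h (f z) = h z) :
    ∃ᶠ w in 𝓝[≠] (f z), h w = h z := by
  intro hisol
  obtain ⟨r, hr, hrh⟩ := nhds_basis_closedBall.eventually_iff.mp
    ((eventually_nhdsWithin_iff.mp hisol).and (isOpen_ball.mem_nhds (hf.2 hz)))
  have hsub : closedBall (f z) r ⊆ ball (0:ℂ) 1 := fun w hw => (hrh hw).2
  have hlim : ∀ w ∈ ball (0:ℂ) 1, Tendsto (fun n => G n (f^[n] w)) atTop (𝓝 (h w)) :=
    fun w hw => hconv.tendsto_at hw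
  obtain ⟨n, w, hw, hwn⟩ := (eventually_exists_mem_ball_eq_of_tendstoUniformlyOn hr
    (c := fun n => G n (f^[n] z))
    (fun n => ((hG n).comp (hf.iterate n).1 (hf.iterate n).2).diffContOnCl_ball hsub)
    (hh.mono (sphere_subset_closedBall.trans hsub))
    ((tendstoLocallyUniformlyOn_iff_forall_isCompact isOpen_ball).mp hconv _ hsub
      (isCompact_closedBall _ _))
    (hfz ▸ hlim z hz)
    fun w hw => hfz ▸ (hrh (sphere_subset_closedBall hw)).1 (ne_of_mem_sphere hw hr.ne')).exists
  have hwD : w ∈ ball (0:ℂ) 1 := hsub (ball_subset_closedBall hw)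
  have hfw : f^[n] w = f^[n] z := hGinj n ((hf.iterate n).2 hwD) ((hf.iterate n).2 hz) hwn
  have hwne : w ≠ f z := by
    rintro rfl
    rw [← Function.iterate_succ_apply, Function.iterate_succ_apply'] at hfw
    exact hfix _ ((hf.iterate n).2 hz) hfw
  exact (hrh (ball_subset_closedBall hw)).1 hwne (eq_of_iterate_eq (hlim w hwD) (hlim z hz) hfw)

theorem stmt8 (f : ℂ → ℂ) (hf : HolSelfDisk f)
    (hfix : ∀ z ∈ ball (0:ℂ) 1, f z ≠ z)
    (z₀ : ℂ) (hz₀ : z₀ ∈ ball (0:ℂ) 1)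
    (hstep : Tendsto (fun n => pd (f^[n] z₀) (f^[n+1] z₀)) atTop (nhds 0)) :
    ∀ (γ γinv : ℕ → ℂ → ℂ) (h : ℂ → ℂ),
      (∀ n, IsDiskAutPair (γ n) (γinv n)) → HolSelfDisk h →
      TendstoLocallyUniformlyOn (fun n z => γinv n (f^[n] z)) h atTop (ball (0:ℂ) 1) →
      ∃ c : ℂ, ∀ z ∈ ball (0:ℂ) 1, h z = c := by
  intro γ γinv h haut hh hconv
  have hfz₀ : f z₀ ∈ ball (0:ℂ) 1 := hf.2 hz₀
  simp only [Function.iterate_succ_apply] at hstep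
  have hperiod : h (f z₀) = h z₀ := (eq_of_tendsto_pd (fun n => (haut n).2.1)
    (fun n => (hf.iterate n).2 hz₀) (fun n => (hf.iterate n).2 hfz₀) hstep
    (hconv.tendsto_at hz₀) (hconv.tendsto_at hfz₀)).symm
  have hfreq : ∃ᶠ w in 𝓝[≠] (f z₀), h w = h z₀ :=
    frequently_apply_eq_of_apply_eq hf hfix (fun n => (haut n).2.1.1) (fun n => (haut n).injOn_inv)
      hh.1.continuousOn hconv hz₀ hperiod
  exact ⟨h z₀, (hh.1.analyticOnNhd isOpen_ball).eqOn_of_preconnected_of_frequently_eq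
    analyticOnNhd_const (convex_ball _ _).isPreconnected hfz₀ hfreq⟩
end

section
/- Let F be a holomorphic self-map of the upper half-plane H⁺, parabolic with Wolff point at ∞ and with positive hyperbolic step. Then either arg F^n → 0 uniformly on compact subsets of H⁺, or arg F^n → π uniformly on compact subsets of H⁺. -/
/-!
Let `zₙ = Fⁿ(i)` and let `ρ` be the pseudo-hyperbolic distance, so that the hyperbolic step is
`artanh ρ(zₙ, zₙ₊₁) → s > 0`. If a subsequence of `zₙ` tended to `∞` non-tangentially, then
`F(zₙ)/zₙ → 1` along it, forcing `ρ(zₙ, zₙ₊₁) → 0`; hence `Im zₙ / |zₙ| → 0`. Two points of a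
thin cone around the real axis lying on opposite sides of the imaginary axis are at
pseudo-hyperbolic distance close to `1`, while the steps stay below some `t < 1`; so the orbit
eventually stays on one side, and `arg zₙ → 0` or `arg zₙ → π`. For `w` in a compact set,
Schwarz–Pick gives `ρ(zₙ, Fⁿ w) ≤ ρ(i, w) ≤ t' < 1`, whence `|Fⁿ w - zₙ| ≤ C Im zₙ = o(|zₙ|)`:
`Fⁿ w / zₙ → 1` uniformly, and `arg Fⁿ w` inherits the limit of `arg zₙ`.
-/

open Complex Metric Filter Set

/-- The upper half-plane as a subset of ℂ. -/
def UHP : Set ℂ := {w : ℂ | 0 < w.im}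

/-- Poincaré distance on the upper half-plane. -/
noncomputable def pdH (w₁ w₂ : ℂ) : ℝ :=
  artanh (‖(w₂ - w₁) / (w₂ - (starRingEnd ℂ) w₁)‖)

/-- Holomorphic self-map of the upper half-plane. -/
def HolSelfUHP (F : ℂ → ℂ) : Prop :=
  DifferentiableOn ℂ F UHP ∧ MapsTo F UHP UHP

/-- A sequence in the upper half-plane converges non-tangentially to ∞. -/
def NonTangToInf (w : ℕ → ℂ) : Prop :=
  Tendsto (fun n => ‖w n‖) atTop atTop ∧
  ∃ ε > 0, ∀ n, ε * ‖w n‖ ≤ (w n).im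

/-- `F` is a parabolic holomorphic self-map of the upper half-plane with Wolff point ∞:
fixed-point-free, iterates tend to ∞ locally uniformly, and `F w / w → 1` along
sequences converging non-tangentially to ∞. -/
def ParabolicAtInf (F : ℂ → ℂ) : Prop :=
  HolSelfUHP F ∧ (∀ w ∈ UHP, F w ≠ w) ∧
  (∀ K ⊆ UHP, IsCompact K → ∀ M : ℝ,
    ∀ᶠ n in atTop, ∀ w ∈ K, M ≤ ‖F^[n] w‖) ∧
  (∀ w : ℕ → ℂ, (∀ n, w n ∈ UHP) → NonTangToInf w →
    Tendsto (fun n => F (w n) / w n) atTop (nhds 1))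

open scoped ComplexConjugate Topology

lemma mem_UHP {w : ℂ} : w ∈ UHP ↔ 0 < w.im := Iff.rfl

lemma isOpen_UHP : IsOpen UHP := isOpen_lt continuous_const continuous_im

lemma im_add_im_le_norm_sub_conj (a w : ℂ) : a.im + w.im ≤ ‖w - conj a‖ := by
  have h := im_le_norm (w - conj a)
  rw [sub_im, conj_im, sub_neg_eq_add] at h
  linarith

lemma norm_sub_conj_le (a w : ℂ) : ‖w - conj a‖ ≤ ‖w - a‖ + 2 * |a.im| := by
  calc ‖w - conj a‖ = ‖(w - a) + (a - conj a)‖ := by ring_nf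
    _ ≤ ‖w - a‖ + ‖a - conj a‖ := norm_add_le _ _
    _ = ‖w - a‖ + 2 * |a.im| := by
      rw [sub_conj, norm_mul, norm_I, mul_one, norm_real, Real.norm_eq_abs, abs_mul,
        abs_two]

lemma sub_conj_ne_zero {a w : ℂ} (ha : 0 < a.im) (hw : 0 < w.im) : w - conj a ≠ 0 :=
  norm_pos_iff.mp ((add_pos ha hw).trans_le (im_add_im_le_norm_sub_conj a w))

noncomputable def cayley (a w : ℂ) : ℂ := (w - a) / (w - conj a)

noncomputable def cayleyInv (a u : ℂ) : ℂ := (conj a * u - a) / (u - 1)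

noncomputable def pseudoDist (a w : ℂ) : ℝ := ‖cayley a w‖

lemma pdH_eq_artanh_pseudoDist (a w : ℂ) : pdH a w = artanh (pseudoDist a w) := rfl

lemma pseudoDist_eq_div (a w : ℂ) : pseudoDist a w = ‖w - a‖ / ‖w - conj a‖ := norm_div _ _

lemma pseudoDist_nonneg (a w : ℂ) : 0 ≤ pseudoDist a w := norm_nonneg _

lemma pseudoDist_lt_one {a w : ℂ} (ha : 0 < a.im) (hw : 0 < w.im) : pseudoDist a w < 1 := by
  rw [pseudoDist_eq_div, div_lt_one (norm_pos_iff.mpr (sub_conj_ne_zero ha hw))]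
  have hsq : ‖w - a‖ ^ 2 < ‖w - conj a‖ ^ 2 := by
    simp only [Complex.sq_norm, normSq_apply, sub_re, sub_im, conj_re, conj_im]
    nlinarith [mul_pos ha hw]
  exact lt_of_pow_lt_pow_left₀ 2 (norm_nonneg _) hsq

lemma mapsTo_cayley {a : ℂ} (ha : a ∈ UHP) : MapsTo (cayley a) UHP (ball 0 1) := fun _ hw =>
  mem_ball_zero_iff.mpr (pseudoDist_lt_one ha hw)

lemma differentiableOn_cayley {a : ℂ} (ha : a ∈ UHP) : DifferentiableOn ℂ (cayley a) UHP :=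
  (differentiableOn_id.sub_const a).div (differentiableOn_id.sub_const _)
    fun _ hw => sub_conj_ne_zero ha hw

lemma sub_one_ne_zero_of_mem_ball {u : ℂ} (hu : u ∈ ball (0 : ℂ) 1) : u - 1 ≠ 0 := by
  intro h
  rw [sub_eq_zero.mp h, mem_ball_zero_iff, norm_one] at hu
  exact lt_irrefl 1 hu

lemma differentiableOn_cayleyInv (a : ℂ) : DifferentiableOn ℂ (cayleyInv a) (ball 0 1) :=
  ((differentiableOn_id.const_mul _).sub_const a).div (differentiableOn_id.sub_const 1)
    fun _ hu => sub_one_ne_zero_of_mem_ball hu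

lemma mapsTo_cayleyInv {a : ℂ} (ha : a ∈ UHP) : MapsTo (cayleyInv a) (ball 0 1) UHP := by
  intro u hu
  have hu2 : normSq u < 1 := by
    rw [← Complex.sq_norm]; nlinarith [norm_nonneg u, mem_ball_zero_iff.mp hu]
  have him : (cayleyInv a u).im = a.im * (1 - normSq u) / normSq (u - 1) := by
    rw [cayleyInv, div_im, div_sub_div_same]
    congr 1
    simp only [mul_im, mul_re, sub_im, sub_re, conj_re, conj_im, normSq_apply, one_re, one_im]
    ring
  rw [mem_UHP, him]
  exact div_pos (mul_pos ha (by linarith)) (normSq_pos.mpr (sub_one_ne_zero_of_mem_ball hu))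

lemma cayleyInv_cayley {a w : ℂ} (ha : 0 < a.im) (hw : 0 < w.im) :
    cayleyInv a (cayley a w) = w := by
  have hd := sub_conj_ne_zero ha hw
  have hconj : conj a - a ≠ 0 := by
    rw [← neg_sub, neg_ne_zero, sub_conj]
    exact mul_ne_zero (ofReal_ne_zero.mpr (mul_ne_zero two_ne_zero ha.ne')) I_ne_zero
  have hne : cayley a w - 1 ≠ 0 := by
    rw [cayley, div_sub_one hd, show w - a - (w - conj a) = conj a - a by ring]
    exact div_ne_zero hconj hd
  rw [cayleyInv, cayley]
  field_simp
  linear_combination w * mul_inv_cancel₀ hconj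

/-- Schwarz–Pick lemma on the upper half-plane. -/
theorem pseudoDist_map_le {F : ℂ → ℂ} (hF : HolSelfUHP F) {z w : ℂ} (hz : z ∈ UHP)
    (hw : w ∈ UHP) : pseudoDist (F z) (F w) ≤ pseudoDist z w := by
  obtain ⟨hd, hm⟩ := hF
  set g := cayley (F z) ∘ F ∘ cayleyInv z
  have hgm : MapsTo g (ball 0 1) (ball 0 1) :=
    (mapsTo_cayley (hm hz)).comp (hm.comp (mapsTo_cayleyInv hz))
  have hgd : DifferentiableOn ℂ g (ball 0 1) :=
    (differentiableOn_cayley (hm hz)).comp (hd.comp (differentiableOn_cayleyInv z)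
      (mapsTo_cayleyInv hz)) (hm.comp (mapsTo_cayleyInv hz))
  have hg0 : g 0 = 0 := by simp [g, cayleyInv, cayley]
  have hgw : g (cayley z w) = cayley (F z) (F w) := by
    simp only [g, Function.comp_apply, cayleyInv_cayley hz hw]
  simpa only [pseudoDist, hgw] using
    norm_le_norm_of_mapsTo_ball hgd (hgm.mono_right ball_subset_closedBall) hg0
      (pseudoDist_lt_one hz hw)

lemma pseudoDist_iterate_le {F : ℂ → ℂ} (hF : HolSelfUHP F) {z w : ℂ} (hz : z ∈ UHP)
    (hw : w ∈ UHP) (n : ℕ) : pseudoDist (F^[n] z) (F^[n] w) ≤ pseudoDist z w := by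
  induction n with
  | zero => rfl
  | succ n ih =>
    rw [Function.iterate_succ_apply', Function.iterate_succ_apply']
    exact (pseudoDist_map_le hF (hF.2.iterate n hz) (hF.2.iterate n hw)).trans ih

lemma norm_sub_le_of_pseudoDist_le {z w : ℂ} (hz : 0 < z.im) (hw : 0 < w.im) {t : ℝ}
    (ht : t < 1) (h : pseudoDist z w ≤ t) : ‖w - z‖ ≤ 2 * t / (1 - t) * z.im := by
  have hD : 0 < ‖w - conj z‖ := norm_pos_iff.mpr (sub_conj_ne_zero hz hw)
  have ht0 : 0 ≤ t := (pseudoDist_nonneg z w).trans h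
  have key : ‖w - z‖ ≤ t * (‖w - z‖ + 2 * z.im) := by
    calc ‖w - z‖ = pseudoDist z w * ‖w - conj z‖ := by
          rw [pseudoDist_eq_div, div_mul_cancel₀ _ hD.ne']
      _ ≤ t * ‖w - conj z‖ := mul_le_mul_of_nonneg_right h hD.le
      _ ≤ t * (‖w - z‖ + 2 * z.im) := by
          rw [← abs_of_pos hz]; exact mul_le_mul_of_nonneg_left (norm_sub_conj_le z w) ht0
  rw [div_mul_eq_mul_div, le_div_iff₀ (by linarith)]
  linarith

lemma pseudoDist_le_norm_div_sub_one {z w : ℂ} (hz : 0 < z.im) (hw : 0 < w.im) :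
    pseudoDist z w ≤ ‖w / z - 1‖ * ‖z‖ / z.im := by
  have hz0 : z ≠ 0 := fun h => by simp [h] at hz
  have hnum : ‖w - z‖ = ‖w / z - 1‖ * ‖z‖ := by
    rw [← norm_mul, sub_mul, div_mul_cancel₀ _ hz0, one_mul]
  rw [pseudoDist_eq_div, hnum]
  exact div_le_div_of_nonneg_left (by positivity) hz
    (by linarith [im_add_im_le_norm_sub_conj z w])

lemma pseudoDist_ge_of_re_mul_re_nonpos {z w : ℂ} (hz : 0 < z.im) (hw : 0 < w.im) {η : ℝ}
    (hη : η < 1) (hcone : z.im ≤ η * ‖z‖) (hre : z.re * w.re ≤ 0) :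
    (1 - η) / (1 + η) ≤ pseudoDist z w := by
  have hη0 : 0 < η := by nlinarith [norm_nonneg z]
  have hD : 0 < ‖w - conj z‖ := norm_pos_iff.mpr (sub_conj_ne_zero hz hw)
  have hre_le : |z.re| ≤ ‖w - z‖ := by
    have : |z.re| ≤ |(w - z).re| := by
      rw [sub_re, ← sq_le_sq]; nlinarith
    exact this.trans (abs_re_le_norm _)
  have hnorm : ‖z‖ ≤ |z.re| + z.im := by
    simpa only [abs_of_pos hz] using norm_le_abs_re_add_abs_im z
  have hdenom : ‖w - conj z‖ ≤ ‖w - z‖ + 2 * z.im := by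
    simpa only [abs_of_pos hz] using norm_sub_conj_le z w
  rw [pseudoDist_eq_div, div_le_div_iff₀ (by linarith) hD]
  nlinarith

lemma tendsto_artanh_zero : Tendsto artanh (𝓝 0) (𝓝 0) := by
  have hcont : ContinuousAt artanh 0 :=
    continuousAt_const.mul <| ContinuousAt.log
      (ContinuousAt.div (by fun_prop) (by fun_prop) (by norm_num)) (by norm_num)
  simpa [artanh] using hcont.tendsto

lemma exists_lt_one_eventually_le_of_tendsto_artanh {α : Type*} {l : Filter α} {r : α → ℝ}
    {s : ℝ} (hr0 : ∀ x, 0 ≤ r x) (hr1 : ∀ x, r x < 1)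
    (h : Tendsto (fun x => artanh (r x)) l (𝓝 s)) : ∃ t < 1, ∀ᶠ x in l, r x ≤ t := by
  set M := Real.exp (2 * (s + 1))
  have hM : 0 < M := Real.exp_pos _
  refine ⟨(M - 1) / (M + 1), (div_lt_one (by linarith)).mpr (by linarith), ?_⟩
  filter_upwards [h.eventually (eventually_le_nhds (lt_add_one s))] with x hx
  have hpos : 0 < (1 + r x) / (1 - r x) := div_pos (by linarith [hr0 x]) (by linarith [hr1 x])
  have hle : (1 + r x) / (1 - r x) ≤ M :=
    (Real.log_le_iff_le_exp hpos).mp (by rw [artanh] at hx; linarith)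
  rw [div_le_iff₀ (by linarith [hr1 x])] at hle
  rw [le_div_iff₀ (by linarith)]
  linarith

lemma arg_eq_arg_add_arg_div {a b : ℂ} (ha : 0 < a.im) (hb : 0 < b.im) :
    arg a = arg b + arg (a / b) := by
  have ha0 : a ≠ 0 := fun h => by simp [h] at ha
  have hb0 : b ≠ 0 := fun h => by simp [h] at hb
  have hmem : arg a - arg b ∈ Ioc (-Real.pi) Real.pi := by
    have := arg_nonneg_iff.mpr ha.le
    have := arg_nonneg_iff.mpr hb.le
    have := arg_lt_pi_iff.mpr (Or.inr hb.ne')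
    have := arg_le_pi a
    constructor <;> linarith
  rw [← arg_coe_angle_toReal_eq_arg (a / b), arg_div_coe_angle ha0 hb0, ← Real.Angle.coe_sub,
    Real.Angle.toReal_coe_eq_self_iff_mem_Ioc.mpr hmem]
  ring

section TendstoArg

variable {α : Type*} {l : Filter α} {z : α → ℂ}

lemma tendsto_arg_of_tendsto_div_one {Z : α → ℂ} {L : ℝ} (hZ : ∀ᶠ x in l, 0 < (Z x).im)
    (hz : ∀ᶠ x in l, 0 < (z x).im) (harg : Tendsto (fun x => arg (z x)) l (𝓝 L))
    (hdiv : Tendsto (fun x => Z x / z x) l (𝓝 1)) :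
    Tendsto (fun x => arg (Z x)) l (𝓝 L) := by
  have harg_div : Tendsto (fun x => arg (Z x / z x)) l (𝓝 0) := by
    simpa [Function.comp_def] using (continuousAt_arg one_mem_slitPlane).tendsto.comp hdiv
  refine (by simpa using harg.add harg_div : Tendsto _ l (𝓝 L)).congr' ?_
  filter_upwards [hZ, hz] with x hZx hzx
  exact (arg_eq_arg_add_arg_div hZx hzx).symm

lemma tendsto_arg_zero_of_re_pos (htan : Tendsto (fun x => (z x).im / ‖z x‖) l (𝓝 0))
    (hre : ∀ᶠ x in l, 0 < (z x).re) : Tendsto (fun x => arg (z x)) l (𝓝 0) := by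
  have h := (Real.continuous_arcsin.tendsto 0).comp htan
  rw [Real.arcsin_zero] at h
  refine h.congr' ?_
  filter_upwards [hre] with x hx
  exact (arg_of_re_nonneg hx.le).symm

lemma tendsto_arg_pi_of_re_neg (htan : Tendsto (fun x => (z x).im / ‖z x‖) l (𝓝 0))
    (him : ∀ᶠ x in l, 0 ≤ (z x).im) (hre : ∀ᶠ x in l, (z x).re < 0) :
    Tendsto (fun x => arg (z x)) l (𝓝 Real.pi) := by
  have hneg : Tendsto (fun x => -((z x).im / ‖z x‖)) l (𝓝 0) := by simpa using htan.neg
  have h := ((Real.continuous_arcsin.tendsto 0).comp hneg).add_const Real.pi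
  rw [Real.arcsin_zero, zero_add] at h
  refine h.congr' ?_
  filter_upwards [him, hre] with x hxi hxr
  rw [arg_of_re_neg_of_im_nonneg hxr hxi, neg_im, neg_div]
  rfl

end TendstoArg

lemma eventually_re_pos_or_eventually_re_neg {z : ℕ → ℂ} (hz : ∀ n, 0 < (z n).im)
    (htan : Tendsto (fun n => (z n).im / ‖z n‖) atTop (𝓝 0)) {t : ℝ} (ht : t < 1)
    (hstep : ∀ᶠ n in atTop, pseudoDist (z n) (z (n + 1)) ≤ t) :
    (∀ᶠ n in atTop, 0 < (z n).re) ∨ (∀ᶠ n in atTop, (z n).re < 0) := by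
  have ht0 : 0 ≤ t := (pseudoDist_nonneg _ _).trans hstep.exists.choose_spec
  set η := (1 - t) / 4 with hη
  have hη0 : 0 < η := by rw [hη]; linarith
  have hη1 : η < 1 := by rw [hη]; linarith
  have hgap : t < (1 - η) / (1 + η) := by
    rw [lt_div_iff₀ (by linarith), hη]; nlinarith
  have hcone : ∀ᶠ n in atTop, (z n).im ≤ η * ‖z n‖ := by
    filter_upwards [htan.eventually (eventually_lt_nhds hη0)] with n hn
    have hzn : 0 < ‖z n‖ := (hz n).trans_le (im_le_norm _)
    exact ((div_lt_iff₀ hzn).mp hn).le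
  obtain ⟨N, hN⟩ := eventually_atTop.mp (hcone.and hstep)
  have hsame : ∀ n ≥ N, 0 < (z n).re * (z (n + 1)).re := fun n hn => by
    by_contra! h
    linarith [pseudoDist_ge_of_re_mul_re_nonpos (hz n) (hz (n + 1)) hη1 (hN n hn).1 h,
      (hN n hn).2]
  rcases (left_ne_zero_of_mul (hsame N le_rfl).ne').lt_or_gt with hneg | hpos
  · refine Or.inr (eventually_atTop.mpr ⟨N, fun n hn => ?_⟩)
    induction n, hn using Nat.le_induction with
    | base => exact hneg
    | succ n hn ih => nlinarith [hsame n hn]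
  · refine Or.inl (eventually_atTop.mpr ⟨N, fun n hn => ?_⟩)
    induction n, hn using Nat.le_induction with
    | base => exact hpos
    | succ n hn ih => nlinarith [hsame n hn]

lemma ParabolicAtInf.tendsto_norm_iterate {F : ℂ → ℂ} (hF : ParabolicAtInf F) {w : ℂ}
    (hw : w ∈ UHP) : Tendsto (fun n => ‖F^[n] w‖) atTop atTop :=
  tendsto_atTop.mpr fun M =>
    (hF.2.2.1 {w} (singleton_subset_iff.mpr hw) isCompact_singleton M).mono fun _ hn => hn w rfl

lemma ParabolicAtInf.tendsto_im_div_norm_iterate {F : ℂ → ℂ} (hF : ParabolicAtInf F) {w : ℂ}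
    (hw : w ∈ UHP) {s : ℝ} (hs : 0 < s)
    (hstep : Tendsto (fun n => pdH (F^[n] w) (F^[n + 1] w)) atTop (𝓝 s)) :
    Tendsto (fun n => (F^[n] w).im / ‖F^[n] w‖) atTop (𝓝 0) := by
  have hz : ∀ n, 0 < (F^[n] w).im := fun n => hF.1.2.iterate n hw
  have hzn : ∀ n, 0 < ‖F^[n] w‖ := fun n => (hz n).trans_le (im_le_norm _)
  refine tendsto_order.mpr ⟨fun a ha => Eventually.of_forall fun n => ha.trans
    (div_pos (hz n) (hzn n)), fun δ hδ => ?_⟩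
  by_contra hfreq
  obtain ⟨φ, hφ, hcone⟩ := extraction_of_frequently_atTop
    ((not_eventually.mp hfreq).mono fun _ h => not_lt.mp h)
  have hnt : NonTangToInf fun k => F^[φ k] w :=
    ⟨(hF.tendsto_norm_iterate hw).comp hφ.tendsto_atTop, δ, hδ,
      fun k => (le_div_iff₀ (hzn _)).mp (hcone k)⟩
  have hratio := hF.2.2.2 _ (fun k => hz (φ k)) hnt
  have hdist : Tendsto (fun k => pseudoDist (F^[φ k] w) (F (F^[φ k] w))) atTop (𝓝 0) := by
    refine squeeze_zero (fun _ => pseudoDist_nonneg _ _) (fun k => ?_)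
      (by simpa using (hratio.sub_const 1).norm.div_const δ)
    calc _ ≤ ‖F (F^[φ k] w) / F^[φ k] w - 1‖ * ‖F^[φ k] w‖ / (F^[φ k] w).im :=
          pseudoDist_le_norm_div_sub_one (hz _) (hF.1.2 (hz _))
      _ ≤ ‖F (F^[φ k] w) / F^[φ k] w - 1‖ / δ := by
          rw [mul_div_assoc, div_eq_mul_inv _ δ]
          exact mul_le_mul_of_nonneg_left (by simpa only [inv_div] using inv_anti₀ hδ (hcone k))
            (norm_nonneg _)
  have hstep0 : Tendsto (fun k => pdH (F^[φ k] w) (F^[φ k + 1] w)) atTop (𝓝 0) := by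
    simpa only [pdH_eq_artanh_pseudoDist, Function.iterate_succ_apply', Function.comp_def] using
      tendsto_artanh_zero.comp hdist
  exact hs.ne' (tendsto_nhds_unique (hstep.comp hφ.tendsto_atTop) hstep0)

theorem tendstoLocallyUniformlyOn_arg_iterate {F : ℂ → ℂ} (hF : HolSelfUHP F) {w₀ : ℂ}
    (hw₀ : w₀ ∈ UHP) (htan : Tendsto (fun n => (F^[n] w₀).im / ‖F^[n] w₀‖) atTop (𝓝 0))
    {L : ℝ} (harg : Tendsto (fun n => arg (F^[n] w₀)) atTop (𝓝 L)) :
    TendstoLocallyUniformlyOn (fun n w => arg (F^[n] w)) (fun _ => L) atTop UHP := by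
  rw [tendstoLocallyUniformlyOn_iff_forall_isCompact isOpen_UHP]
  intro K hKU hK
  obtain ⟨t, ht, hKt⟩ : ∃ t < 1, ∀ w ∈ K, pseudoDist w₀ w ≤ t := by
    have hcont : ContinuousOn (cayley w₀) K := (differentiableOn_cayley hw₀).continuousOn.mono hKU
    obtain ⟨t, ht, hsub⟩ := exists_lt_subset_ball (hK.image_of_continuousOn hcont).isClosed
      ((mapsTo_cayley hw₀).mono_left hKU).image_subset
    exact ⟨t, ht, fun w hw => (mem_ball_zero_iff.mp (hsub (mem_image_of_mem _ hw))).le⟩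
  rw [← tendsto_prod_principal_iff]
  have hmemK : ∀ᶠ q : ℕ × ℂ in atTop ×ˢ 𝓟 K, q.2 ∈ K := tendsto_snd (mem_principal_self K)
  have horbit : ∀ n, 0 < (F^[n] w₀).im := fun n => hF.2.iterate n hw₀
  refine tendsto_arg_of_tendsto_div_one (hmemK.mono fun q hq => hF.2.iterate q.1 (hKU hq))
    (Eventually.of_forall fun q => horbit q.1) (harg.comp tendsto_fst) ?_
  rw [tendsto_iff_norm_sub_tendsto_zero]
  refine squeeze_zero' (Eventually.of_forall fun _ => norm_nonneg _) ?_
    (by simpa using (htan.comp tendsto_fst).const_mul (2 * t / (1 - t)))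
  filter_upwards [hmemK] with q hq
  have hz := horbit q.1
  have hz0 : F^[q.1] w₀ ≠ 0 := fun h => by simp [h] at hz
  have hclose := norm_sub_le_of_pseudoDist_le hz (hF.2.iterate q.1 (hKU hq)) ht
    ((pseudoDist_iterate_le hF hw₀ (hKU hq) q.1).trans (hKt _ hq))
  rw [div_sub_one hz0, norm_div, ← mul_div_assoc]
  exact div_le_div_of_nonneg_right hclose (norm_nonneg _)

theorem stmt18 (F : ℂ → ℂ) (hF : ParabolicAtInf F)
    (hstep : ∀ w ∈ UHP, ∃ s > 0,
      Tendsto (fun n => pdH (F^[n] w) (F^[n+1] w)) atTop (nhds s)) :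
    TendstoLocallyUniformlyOn (fun n w => (F^[n] w).arg) (fun _ => 0) atTop UHP ∨
    TendstoLocallyUniformlyOn (fun n w => (F^[n] w).arg) (fun _ => Real.pi) atTop UHP := by
  have hI : I ∈ UHP := by simp [mem_UHP]
  have horbit : ∀ n, 0 < (F^[n] I).im := fun n => hF.1.2.iterate n hI
  obtain ⟨s, hs, hstepI⟩ := hstep I hI
  have htan := hF.tendsto_im_div_norm_iterate hI hs hstepI
  obtain ⟨t, ht, hstep_le⟩ := exists_lt_one_eventually_le_of_tendsto_artanh
    (fun n => pseudoDist_nonneg _ _) (fun n => pseudoDist_lt_one (horbit n) (horbit (n + 1)))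
    hstepI
  rcases eventually_re_pos_or_eventually_re_neg horbit htan ht hstep_le with hpos | hneg
  · exact Or.inl (tendstoLocallyUniformlyOn_arg_iterate hF.1 hI htan
      (tendsto_arg_zero_of_re_pos htan hpos))
  · exact Or.inr (tendstoLocallyUniformlyOn_arg_iterate hF.1 hI htan
      (tendsto_arg_pi_of_re_neg htan (Eventually.of_forall fun n => (horbit n).le) hneg))
end
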